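/- arXiv:hep-th/9310201 — 2 statements merged into one kernel-verified Lean document; each statement's English description precedes it below -/
import Mathlib

section
/- Let X be a topological space, ι a nonempty directed preordered index set, and for each i ∈ ι let X_i be a compact Hausdorff topological space with a continuous surjection p_i : X → X_i; for i ≤ j let π_{ij} : X_j → X_i be continuous maps satisfying π_{ij} ∘ p_j = p_i. Suppose μ_i is a finite Borel measure on X_i for each i, and the family is consistent: for i ≤ j, the pushforward of μ_j along π_{ij} equals μ_i. Then there exists a unique continuous linear functional Λ on the closure (in the supremum norm, inside the Banach space of bounded continuous complex-valued functions on X) of the linear span of the cylinder functions {F ∘ p_i : i ∈ ι, F ∈ C(X_i, ℂ)}, such that Λ(F ∘ p_i) = ∫_{X_i} F dμ_i for all i and all F ∈ C(X_i, ℂ); moreover, for any fixed i₀ ∈ ι, ‖Λ‖ ≤ μ_{i₀}(X_{i₀}). -/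
open MeasureTheory BoundedContinuousFunction

/-!
Every element of the span of the cylinder functions is itself a cylinder function `F ∘ p i`,
because two cylinder functions can be pulled back to a common refinement `k ≥ i, j` along the
`π`'s. Setting `Λ (F ∘ p i) = ∫ F dμ i` is then well defined: `F ∘ p i = G ∘ p j` forces
`F ∘ π i k = G ∘ π j k` by surjectivity of `p k`, and consistency turns both integrals into
integrals over `X k`. Since `p i` is surjective, `‖F ∘ p i‖ = ‖F‖`, so `Λ` is bounded by
the common total mass and extends uniquely to the closure.
-/

namespace BoundedContinuousFunction

variable {α β γ : Type*} [TopologicalSpace α] [TopologicalSpace γ]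

theorem compContinuous_injective [PseudoMetricSpace β] {g : C(γ, α)}
    (hg : Function.Surjective g) : Function.Injective fun F : α →ᵇ β => F.compContinuous g :=
  fun F G hFG => ext fun y => by
    obtain ⟨x, rfl⟩ := hg y
    exact DFunLike.congr_fun hFG x

theorem norm_compContinuous_of_surjective [SeminormedAddCommGroup β] (F : α →ᵇ β)
    {g : C(γ, α)} (hg : Function.Surjective g) : ‖F.compContinuous g‖ = ‖F‖ := by
  refine le_antisymm (norm_compContinuous_le F g) ((norm_le (norm_nonneg _)).2 fun y => ?_)
  obtain ⟨x, rfl⟩ := hg y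
  exact (F.compContinuous g).norm_coe_le_norm x

theorem integral_compContinuous_of_map_eq [NormedAddCommGroup β] [NormedSpace ℝ β]
    [SecondCountableTopology β] [MeasurableSpace α] [BorelSpace α] [MeasurableSpace γ]
    [OpensMeasurableSpace γ]
    {μ : Measure γ} {ν : Measure α} {g : C(γ, α)} (hμν : μ.map g = ν) (F : α →ᵇ β) :
    ∫ x, F.compContinuous g x ∂μ = ∫ y, F y ∂ν := by
  rw [← hμν, integral_map g.continuous.aemeasurable F.continuous.aestronglyMeasurable]
  rfl

end BoundedContinuousFunction

namespace Submodule

variable {𝕜 E : Type*} [NontriviallyNormedField 𝕜] [NormedAddCommGroup E] [NormedSpace 𝕜 E]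
  (M : Submodule 𝕜 E)

def inclusionTopologicalClosure : M →L[𝕜] M.topologicalClosure :=
  M.subtypeL.codRestrict _ fun x => M.le_topologicalClosure x.2

theorem isometry_inclusionTopologicalClosure : Isometry M.inclusionTopologicalClosure :=
  fun _ _ => rfl

theorem denseRange_inclusionTopologicalClosure : DenseRange M.inclusionTopologicalClosure :=
  (denseRange_inclusion_iff M.le_topologicalClosure).2 (M.topologicalClosure_coe ▸ subset_rfl)

theorem exists_unique_extend_topologicalClosure {F : Type*} [NormedAddCommGroup F]
    [NormedSpace 𝕜 F] [CompleteSpace F] (f : M →L[𝕜] F) :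
    ∃ g : M.topologicalClosure →L[𝕜] F,
      g.comp M.inclusionTopologicalClosure = f ∧ ‖g‖ ≤ ‖f‖ ∧
      ∀ g' : M.topologicalClosure →L[𝕜] F,
        g'.comp M.inclusionTopologicalClosure = f → g' = g := by
  have hdense := M.denseRange_inclusionTopologicalClosure
  have hind := M.isometry_inclusionTopologicalClosure.isUniformInducing
  refine ⟨f.extend M.inclusionTopologicalClosure, ?_, ?_, fun g' hg' => ?_⟩
  · ext x
    exact f.extend_eq hdense hind x
  · simpa using f.opNorm_extend_le (N := 1) hdense fun x => (one_mul ‖x‖).ge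
  · exact (f.extend_unique hdense hind g' hg').symm

end Submodule

section CylinderFunctions

variable {X ι : Type*} [TopologicalSpace X] [Preorder ι] {Xi : ι → Type*}
  [∀ i, TopologicalSpace (Xi i)] {p : ∀ i, C(X, Xi i)} {π : ∀ i j, i ≤ j → C(Xi j, Xi i)}

variable (p) in
def cylinderFunctions : Set (X →ᵇ ℂ) :=
  {f | ∃ (i : ι) (F : Xi i →ᵇ ℂ), f = F.compContinuous (p i)}

theorem compContinuous_eq_compContinuous_comp (hπ : ∀ i j h, (π i j h).comp (p j) = p i)
    {i j : ι} (h : i ≤ j) (F : Xi i →ᵇ ℂ) :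
    F.compContinuous (p i) = (F.compContinuous (π i j h)).compContinuous (p j) := by
  rw [← hπ i j h]
  rfl

variable [IsDirected ι (· ≤ ·)]

theorem add_mem_cylinderFunctions (hπ : ∀ i j h, (π i j h).comp (p j) = p i)
    {f g : X →ᵇ ℂ} (hf : f ∈ cylinderFunctions p) (hg : g ∈ cylinderFunctions p) :
    f + g ∈ cylinderFunctions p := by
  obtain ⟨i, F, rfl⟩ := hf
  obtain ⟨j, G, rfl⟩ := hg
  obtain ⟨k, hik, hjk⟩ := directed_of (· ≤ ·) i j
  refine ⟨k, F.compContinuous (π i k hik) + G.compContinuous (π j k hjk), ?_⟩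
  rw [compContinuous_eq_compContinuous_comp hπ hik, compContinuous_eq_compContinuous_comp hπ hjk]
  rfl

theorem mem_cylinderFunctions_of_mem_span [Nonempty ι]
    (hπ : ∀ i j h, (π i j h).comp (p j) = p i)
    {f : X →ᵇ ℂ} (hf : f ∈ Submodule.span ℂ (cylinderFunctions p)) :
    f ∈ cylinderFunctions p := by
  induction hf using Submodule.span_induction with
  | mem f hf => exact hf
  | zero => exact ⟨Classical.arbitrary ι, 0, rfl⟩
  | add f g _ _ hf hg => exact add_mem_cylinderFunctions hπ hf hg
  | smul c f _ hf =>
    obtain ⟨i, F, rfl⟩ := hf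
    exact ⟨i, c • F, rfl⟩

variable [∀ i, MeasurableSpace (Xi i)] [∀ i, BorelSpace (Xi i)] {μ : ∀ i, Measure (Xi i)}

theorem measure_univ_eq_of_consistent (hcons : ∀ i j h, (μ j).map (π i j h) = μ i) (i j : ι) :
    μ i Set.univ = μ j Set.univ := by
  obtain ⟨k, hik, hjk⟩ := directed_of (· ≤ ·) i j
  have h_univ : ∀ l (h : l ≤ k), μ l Set.univ = μ k Set.univ := fun l h => by
    rw [← hcons l k h, Measure.map_apply (π l k h).continuous.measurable .univ]
    rfl
  rw [h_univ i hik, h_univ j hjk]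

theorem integral_eq_of_compContinuous_eq (hp : ∀ i, Function.Surjective (p i))
    (hπ : ∀ i j h, (π i j h).comp (p j) = p i) (hcons : ∀ i j h, (μ j).map (π i j h) = μ i)
    {i j : ι} {F : Xi i →ᵇ ℂ} {G : Xi j →ᵇ ℂ}
    (hFG : F.compContinuous (p i) = G.compContinuous (p j)) :
    ∫ x, F x ∂μ i = ∫ x, G x ∂μ j := by
  obtain ⟨k, hik, hjk⟩ := directed_of (· ≤ ·) i j
  have hk : F.compContinuous (π i k hik) = G.compContinuous (π j k hjk) :=
    compContinuous_injective (hp k) <| by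
      simpa only [← compContinuous_eq_compContinuous_comp hπ] using hFG
  rw [← integral_compContinuous_of_map_eq (hcons i k hik),
    ← integral_compContinuous_of_map_eq (hcons j k hjk), hk]

variable (p μ) in
open Classical in
/-- Integrates a chosen representative `F ∘ p i` of `f`; the value `0` off the cylinder
functions is a junk value. -/
noncomputable def cylinderIntegral (f : X →ᵇ ℂ) : ℂ :=
  if h : f ∈ cylinderFunctions p then ∫ x, h.choose_spec.choose x ∂μ h.choose else 0

theorem cylinderIntegral_compContinuous (hp : ∀ i, Function.Surjective (p i))
    (hπ : ∀ i j h, (π i j h).comp (p j) = p i) (hcons : ∀ i j h, (μ j).map (π i j h) = μ i)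
    (i : ι) (F : Xi i →ᵇ ℂ) :
    cylinderIntegral p μ (F.compContinuous (p i)) = ∫ x, F x ∂μ i := by
  have h : F.compContinuous (p i) ∈ cylinderFunctions p := ⟨i, F, rfl⟩
  rw [cylinderIntegral, dif_pos h]
  exact integral_eq_of_compContinuous_eq hp hπ hcons h.choose_spec.choose_spec.symm

theorem cylinderIntegral_smul (hp : ∀ i, Function.Surjective (p i))
    (hπ : ∀ i j h, (π i j h).comp (p j) = p i) (hcons : ∀ i j h, (μ j).map (π i j h) = μ i)
    (c : ℂ) {f : X →ᵇ ℂ} (hf : f ∈ cylinderFunctions p) :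
    cylinderIntegral p μ (c • f) = c • cylinderIntegral p μ f := by
  obtain ⟨i, F, rfl⟩ := hf
  change cylinderIntegral p μ ((c • F).compContinuous (p i)) = _
  simp only [cylinderIntegral_compContinuous hp hπ hcons]
  exact integral_smul c _

variable [∀ i, IsFiniteMeasure (μ i)]

theorem cylinderIntegral_add (hp : ∀ i, Function.Surjective (p i))
    (hπ : ∀ i j h, (π i j h).comp (p j) = p i) (hcons : ∀ i j h, (μ j).map (π i j h) = μ i)
    {f g : X →ᵇ ℂ} (hf : f ∈ cylinderFunctions p) (hg : g ∈ cylinderFunctions p) :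
    cylinderIntegral p μ (f + g) = cylinderIntegral p μ f + cylinderIntegral p μ g := by
  obtain ⟨i, F, rfl⟩ := hf
  obtain ⟨j, G, rfl⟩ := hg
  obtain ⟨k, hik, hjk⟩ := directed_of (· ≤ ·) i j
  rw [compContinuous_eq_compContinuous_comp hπ hik, compContinuous_eq_compContinuous_comp hπ hjk,
    ← add_compContinuous]
  simp only [cylinderIntegral_compContinuous hp hπ hcons]
  exact integral_add (integrable _ _) (integrable _ _)

theorem norm_cylinderIntegral_le (hp : ∀ i, Function.Surjective (p i))
    (hπ : ∀ i j h, (π i j h).comp (p j) = p i) (hcons : ∀ i j h, (μ j).map (π i j h) = μ i)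
    (i₀ : ι) {f : X →ᵇ ℂ} (hf : f ∈ cylinderFunctions p) :
    ‖cylinderIntegral p μ f‖ ≤ (μ i₀ Set.univ).toReal * ‖f‖ := by
  obtain ⟨i, F, rfl⟩ := hf
  rw [cylinderIntegral_compContinuous hp hπ hcons, norm_compContinuous_of_surjective _ (hp i),
    ← measure_univ_eq_of_consistent hcons i i₀]
  exact F.norm_integral_le_mul_norm (μ i)

theorem exists_continuousLinearMap_span_cylinderFunctions (hp : ∀ i, Function.Surjective (p i))
    (hπ : ∀ i j h, (π i j h).comp (p j) = p i) (hcons : ∀ i j h, (μ j).map (π i j h) = μ i)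
    (i₀ : ι) :
    ∃ Λ : Submodule.span ℂ (cylinderFunctions p) →L[ℂ] ℂ,
      (∀ f, Λ f = cylinderIntegral p μ f) ∧ ‖Λ‖ ≤ (μ i₀ Set.univ).toReal := by
  have : Nonempty ι := ⟨i₀⟩
  have mem (f : Submodule.span ℂ (cylinderFunctions p)) :=
    mem_cylinderFunctions_of_mem_span hπ f.2
  let Λ : Submodule.span ℂ (cylinderFunctions p) →ₗ[ℂ] ℂ :=
    { toFun f := cylinderIntegral p μ f
      map_add' f g := cylinderIntegral_add hp hπ hcons (mem f) (mem g)
      map_smul' c f := cylinderIntegral_smul hp hπ hcons c (mem f) }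
  exact ⟨Λ.mkContinuous _ fun f => norm_cylinderIntegral_le hp hπ hcons i₀ (mem f),
    fun _ => rfl, Λ.mkContinuous_norm_le ENNReal.toReal_nonneg _⟩

end CylinderFunctions

theorem generalized_measure_from_consistent_measures_general
    {X : Type*} [TopologicalSpace X]
    {ι : Type*} [Preorder ι] [IsDirected ι (· ≤ ·)]
    (Xi : ι → Type*) [∀ i, TopologicalSpace (Xi i)]
    [∀ i, MeasurableSpace (Xi i)] [∀ i, BorelSpace (Xi i)]
    (p : ∀ i, C(X, Xi i)) (hp : ∀ i, Function.Surjective (p i))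
    (π : ∀ i j, i ≤ j → C(Xi j, Xi i))
    (hπ : ∀ (i j : ι) (h : i ≤ j), (π i j h).comp (p j) = p i)
    (μ : ∀ i, Measure (Xi i)) [∀ i, IsFiniteMeasure (μ i)]
    (hcons : ∀ (i j : ι) (h : i ≤ j), (μ j).map (π i j h) = μ i)
    (i₀ : ι) :
    ∃ Λ : (Submodule.span ℂ {f : X →ᵇ ℂ |
        ∃ (i : ι) (F : Xi i →ᵇ ℂ), f = F.compContinuous (p i)}).topologicalClosure
        →L[ℂ] ℂ,
      (∀ (i : ι) (F : Xi i →ᵇ ℂ),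
        Λ ⟨F.compContinuous (p i),
            Submodule.le_topologicalClosure _
              (Submodule.subset_span ⟨i, F, rfl⟩)⟩ = ∫ x, F x ∂(μ i)) ∧
      ‖Λ‖ ≤ ((μ i₀) Set.univ).toReal ∧
      ∀ Λ' : (Submodule.span ℂ {f : X →ᵇ ℂ |
          ∃ (i : ι) (F : Xi i →ᵇ ℂ), f = F.compContinuous (p i)}).topologicalClosure
          →L[ℂ] ℂ,
        (∀ (i : ι) (F : Xi i →ᵇ ℂ),
          Λ' ⟨F.compContinuous (p i),
              Submodule.le_topologicalClosure _
                (Submodule.subset_span ⟨i, F, rfl⟩)⟩ = ∫ x, F x ∂(μ i)) →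
        Λ' = Λ := by
  have : Nonempty ι := ⟨i₀⟩
  obtain ⟨Λ₀, hΛ₀, hΛ₀_norm⟩ :=
    exists_continuousLinearMap_span_cylinderFunctions hp hπ hcons i₀
  obtain ⟨Λ, hΛ, hΛ_norm, hΛ_unique⟩ :=
    Submodule.exists_unique_extend_topologicalClosure _ Λ₀
  have hΛ_cyl (i : ι) (F : Xi i →ᵇ ℂ) :
      Λ ⟨F.compContinuous (p i),
        Submodule.le_topologicalClosure _ (Submodule.subset_span ⟨i, F, rfl⟩)⟩ =
        ∫ x, F x ∂μ i :=
    (DFunLike.congr_fun hΛ ⟨_, Submodule.subset_span ⟨i, F, rfl⟩⟩).trans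
      ((hΛ₀ _).trans (cylinderIntegral_compContinuous hp hπ hcons i F))
  refine ⟨Λ, hΛ_cyl, hΛ_norm.trans hΛ₀_norm, fun Λ' hΛ' => hΛ_unique Λ' ?_⟩
  ext ⟨f, hf⟩
  obtain ⟨i, F, rfl⟩ := mem_cylinderFunctions_of_mem_span hπ hf
  exact (hΛ' i F).trans
    ((cylinderIntegral_compContinuous hp hπ hcons i F).symm.trans (hΛ₀ ⟨_, hf⟩).symm)

/-- A consistent family of finite Borel measures on a directed
system of compact Hausdorff spaces `X i` with continuous surjections `p i : X → X i`
determines a unique continuous linear functional on the sup-norm closure of the span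
of cylinder functions on `X`, integrating each cylinder function against the
corresponding measure; its norm is bounded by the common total mass. -/
theorem generalized_measure_from_consistent_measures
    {X : Type*} [TopologicalSpace X]
    {ι : Type*} [Preorder ι] [Nonempty ι] [IsDirected ι (· ≤ ·)]
    (Xi : ι → Type*) [∀ i, TopologicalSpace (Xi i)]
    [∀ i, CompactSpace (Xi i)] [∀ i, T2Space (Xi i)]
    [∀ i, MeasurableSpace (Xi i)] [∀ i, BorelSpace (Xi i)]
    (p : ∀ i, C(X, Xi i)) (hp : ∀ i, Function.Surjective (p i))
    (π : ∀ i j, i ≤ j → C(Xi j, Xi i))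
    (hπ : ∀ (i j : ι) (h : i ≤ j), (π i j h).comp (p j) = p i)
    (μ : ∀ i, Measure (Xi i)) [∀ i, IsFiniteMeasure (μ i)]
    (hcons : ∀ (i j : ι) (h : i ≤ j), (μ j).map (π i j h) = μ i)
    (i₀ : ι) :
    ∃ Λ : (Submodule.span ℂ {f : X →ᵇ ℂ |
        ∃ (i : ι) (F : Xi i →ᵇ ℂ), f = F.compContinuous (p i)}).topologicalClosure
        →L[ℂ] ℂ,
      (∀ (i : ι) (F : Xi i →ᵇ ℂ),
        Λ ⟨F.compContinuous (p i),
            Submodule.le_topologicalClosure _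
              (Submodule.subset_span ⟨i, F, rfl⟩)⟩ = ∫ x, F x ∂(μ i)) ∧
      ‖Λ‖ ≤ ((μ i₀) Set.univ).toReal ∧
      ∀ Λ' : (Submodule.span ℂ {f : X →ᵇ ℂ |
          ∃ (i : ι) (F : Xi i →ᵇ ℂ), f = F.compContinuous (p i)}).topologicalClosure
          →L[ℂ] ℂ,
        (∀ (i : ι) (F : Xi i →ᵇ ℂ),
          Λ' ⟨F.compContinuous (p i),
              Submodule.le_topologicalClosure _
                (Submodule.subset_span ⟨i, F, rfl⟩)⟩ = ∫ x, F x ∂(μ i)) →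
        Λ' = Λ :=
  generalized_measure_from_consistent_measures_general Xi p hp π hπ μ hcons i₀
end

section
/- Let K be a compact Hausdorff topological group with normalized Haar (probability) measure μ, acting continuously on a compact Hausdorff space X, and let M : C(X, ℂ) → C(X, ℂ) be the averaging operator (Mf)(x) = ∫_K f(k • x) dμ(k). Let S ⊆ C(X, ℂ) be a set of continuous functions with M(S) ⊆ S. If f ∈ C(X, ℂ) is K-invariant (f(k • x) = f(x) for all k ∈ K, x ∈ X) and f lies in the closure of S in the supremum norm, then f lies in the closure, in the supremum norm, of the set of K-invariant elements of S. -/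
/-!
Averaging `g ↦ ∫ k, g (k • ·) ∂μ` maps `S` into its `K`-invariant part and does not increase the
distance to an invariant `f`, because `f` is its own average:
`f x - M g x = ∫ k, (f - g) (k • x) ∂μ`. Invariance of the averages is right invariance of `μ`,
which holds because on a compact group a left Haar probability measure is unique and
`map (· * g) μ` is another one.
-/

open MeasureTheory

theorem Metric.mem_closure_of_dist_le_of_mapsTo {α : Type*} [PseudoMetricSpace α]
    {s t : Set α} {a : α} (T : α → α) (hT : Set.MapsTo T s t)
    (hdist : ∀ b ∈ s, dist a (T b) ≤ dist a b) (ha : a ∈ closure s) : a ∈ closure t := by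
  rw [Metric.mem_closure_iff] at ha ⊢
  intro ε hε
  obtain ⟨b, hb, hab⟩ := ha ε hε
  exact ⟨T b, hT hb, (hdist b hb).trans_lt hab⟩

namespace MeasureTheory.Measure

variable {K : Type*} [Group K] [TopologicalSpace K] [IsTopologicalGroup K] [CompactSpace K]
  [MeasurableSpace K] [BorelSpace K]

theorem isHaarMeasure_of_isProbabilityMeasure (μ : Measure K) [μ.IsMulLeftInvariant]
    [IsProbabilityMeasure μ] : μ.IsHaarMeasure :=
  isHaarMeasure_of_isCompact_nonempty_interior μ Set.univ isCompact_univ (by simp) (by simp)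
    (by simp)

theorem isMulRightInvariant_of_isProbabilityMeasure (μ : Measure K) [μ.IsMulLeftInvariant]
    [IsProbabilityMeasure μ] : μ.IsMulRightInvariant where
  map_mul_right_eq_self g :=
    have := isHaarMeasure_of_isProbabilityMeasure μ
    have : IsProbabilityMeasure (map (· * g) μ) :=
      isProbabilityMeasure_map (measurable_mul_const g).aemeasurable
    isHaarMeasure_eq_of_isProbabilityMeasure _ _

end MeasureTheory.Measure

section Averaging

variable {K X E : Type*} [Group K] [MeasurableSpace K] [MulAction K X]
  [NormedAddCommGroup E] [NormedSpace ℝ E] (μ : Measure K)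

theorem integral_smul_smul_eq_self [MeasurableMul K] [μ.IsMulRightInvariant]
    (φ : X → E) (k : K) (x : X) : ∫ k', φ (k' • k • x) ∂μ = ∫ k', φ (k' • x) ∂μ := by
  simp_rw [← mul_smul]
  exact integral_mul_right_eq_self (fun k' => φ (k' • x)) k

theorem dist_integral_smul_le_dist [TopologicalSpace K] [OpensMeasurableSpace K] [CompactSpace K]
    [IsProbabilityMeasure μ] [CompleteSpace E] [TopologicalSpace X] [CompactSpace X]
    [ContinuousSMul K X]
    {f : C(X, E)} (hf : ∀ (k : K) (x : X), f (k • x) = f x) (g : C(X, E)) (x : X) :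
    dist (f x) (∫ k, g (k • x) ∂μ) ≤ dist f g := by
  have hg : Integrable (fun k : K => g (k • x)) μ :=
    (g.continuous.comp (continuous_id.smul continuous_const)).integrable_of_hasCompactSupport
      (.of_compactSpace _)
  calc dist (f x) (∫ k, g (k • x) ∂μ)
      = ‖∫ k, (f (k • x) - g (k • x)) ∂μ‖ := by
        simp_rw [hf]
        rw [integral_sub (integrable_const _) hg, integral_const, probReal_univ, one_smul,
          dist_eq_norm]
    _ ≤ dist f g * μ.real Set.univ :=
        norm_integral_le_of_norm_le_const (.of_forall fun k => by
          rw [← dist_eq_norm]; exact ContinuousMap.dist_apply_le_dist _)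
    _ = dist f g := by simp

end Averaging

theorem invariant_limit_of_invariant_approximants_general
    {K : Type*} [Group K] [TopologicalSpace K] [IsTopologicalGroup K]
    [CompactSpace K] [MeasurableSpace K] [BorelSpace K]
    (μ : Measure K) [μ.IsMulLeftInvariant] [IsProbabilityMeasure μ]
    {X : Type*} [TopologicalSpace X] [CompactSpace X]
    [MulAction K X] [ContinuousSMul K X]
    (M : C(X, ℂ) → C(X, ℂ))
    (hM : ∀ (f : C(X, ℂ)) (x : X), M f x = ∫ k, f (k • x) ∂μ)
    (S : Set C(X, ℂ)) (hS : ∀ f ∈ S, M f ∈ S)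
    (f : C(X, ℂ)) (hf : ∀ (k : K) (x : X), f (k • x) = f x)
    (hfS : f ∈ closure S) :
    f ∈ closure {g : C(X, ℂ) | g ∈ S ∧ ∀ (k : K) (x : X), g (k • x) = g x} := by
  have := Measure.isMulRightInvariant_of_isProbabilityMeasure μ
  refine Metric.mem_closure_of_dist_le_of_mapsTo M (fun g hg => ⟨hS g hg, fun k x => ?_⟩)
    (fun g _ => (ContinuousMap.dist_le dist_nonneg).2 fun x => ?_) hfS
  · rw [hM, hM, integral_smul_smul_eq_self]
  · rw [hM]
    exact dist_integral_smul_le_dist μ hf g x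

/-- If `S ⊆ C(X, ℂ)` is stable under the averaging operator `M`
over the action of a compact Hausdorff group `K` (with normalized Haar probability
measure `μ`) and `f` is a `K`-invariant function lying in the (sup-norm) closure
of `S`, then `f` lies in the closure of the set of `K`-invariant elements of `S`. -/
theorem invariant_limit_of_invariant_approximants
    {K : Type*} [Group K] [TopologicalSpace K] [IsTopologicalGroup K]
    [CompactSpace K] [T2Space K] [MeasurableSpace K] [BorelSpace K]
    (μ : Measure K) [μ.IsMulLeftInvariant] [IsProbabilityMeasure μ]
    {X : Type*} [TopologicalSpace X] [CompactSpace X] [T2Space X]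
    [MulAction K X] [ContinuousSMul K X]
    (M : C(X, ℂ) → C(X, ℂ))
    (hM : ∀ (f : C(X, ℂ)) (x : X), M f x = ∫ k, f (k • x) ∂μ)
    (S : Set C(X, ℂ)) (hS : ∀ f ∈ S, M f ∈ S)
    (f : C(X, ℂ)) (hf : ∀ (k : K) (x : X), f (k • x) = f x)
    (hfS : f ∈ closure S) :
    f ∈ closure {g : C(X, ℂ) | g ∈ S ∧ ∀ (k : K) (x : X), g (k • x) = g x} :=
  invariant_limit_of_invariant_approximants_general μ M hM S hS f hf hfS
end
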